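/- Let G be a finite abelian group, k a field whose characteristic does not divide |G|, and χ₁,…,χ_N : G → kˣ characters, with G acting diagonally on k[x₁,…,x_N] by g·x_i = χ_i(g)x_i. Then every G-invariant rational function of degree at most d lies in the subfield of k(x₁,…,x_N) generated over k by the G-invariant Laurent monomials of degree at most d, i.e. by {x^a : a ∈ L(G,V), deg a ≤ d}. -/

import Mathlib

open MvPolynomial

noncomputable section

variable {k : Type} [Field k] {N : ℕ} {G : Type}

def mAct (M : Matrix (Fin N) (Fin N) k) :
    MvPolynomial (Fin N) k →ₐ[k] MvPolynomial (Fin N) k :=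
  aeval fun i => ∑ j, C (M i j) * X j

lemma mAct_comp (A B : Matrix (Fin N) (Fin N) k) :
    (mAct A).comp (mAct B) = mAct (B * A) := by
  apply MvPolynomial.algHom_ext
  intro i
  simp only [mAct, AlgHom.comp_apply, aeval_X, map_sum, map_mul, aeval_C, algebraMap_eq,
    Finset.mul_sum, Matrix.mul_apply, Finset.sum_mul]
  rw [Finset.sum_comm]
  simp [mul_assoc]

lemma mAct_one : mAct (1 : Matrix (Fin N) (Fin N) k) = AlgHom.id k _ := by
  apply MvPolynomial.algHom_ext
  intro i
  simp [mAct, Matrix.one_apply, ite_mul, apply_ite C]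

def mEquiv (M : GL (Fin N) k) :
    MvPolynomial (Fin N) k ≃ₐ[k] MvPolynomial (Fin N) k :=
  AlgEquiv.ofAlgHom (mAct (M : Matrix (Fin N) (Fin N) k))
    (mAct ((M⁻¹ : GL (Fin N) k) : Matrix (Fin N) (Fin N) k))
    (by rw [mAct_comp, Units.inv_mul, mAct_one])
    (by rw [mAct_comp, Units.mul_inv, mAct_one])

def fAct (M : GL (Fin N) k) :
    FractionRing (MvPolynomial (Fin N) k) ≃+* FractionRing (MvPolynomial (Fin N) k) :=
  IsFractionRing.ringEquivOfRingEquiv (mEquiv M).toRingEquiv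

/-- `f` is an invariant rational function for the linear action `ρ`. -/
def IsInv (ρ : G → GL (Fin N) k) (f : FractionRing (MvPolynomial (Fin N) k)) : Prop :=
  ∀ g, fAct (ρ g) f = f

/-- `f`, written as a quotient `f₁/f₂` of coprime polynomials, has
`deg f = deg f₁ + deg f₂ ≤ d`. -/
def RDegLE (f : FractionRing (MvPolynomial (Fin N) k)) (d : ℕ) : Prop :=
  ∃ f₁ f₂ : MvPolynomial (Fin N) k, f₂ ≠ 0 ∧
    (∀ p : MvPolynomial (Fin N) k, p ∣ f₁ → p ∣ f₂ → IsUnit p) ∧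
    f = algebraMap (MvPolynomial (Fin N) k) (FractionRing (MvPolynomial (Fin N) k)) f₁ /
        algebraMap (MvPolynomial (Fin N) k) (FractionRing (MvPolynomial (Fin N) k)) f₂ ∧
    f₁.totalDegree + f₂.totalDegree ≤ d

/-- `f` is (the image in `k(V)` of) a polynomial of degree at most `d`. -/
def PDegLE (f : FractionRing (MvPolynomial (Fin N) k)) (d : ℕ) : Prop :=
  ∃ p : MvPolynomial (Fin N) k, p.totalDegree ≤ d ∧
    f = algebraMap (MvPolynomial (Fin N) k) (FractionRing (MvPolynomial (Fin N) k)) p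

/-- `β^r(G,V)`: the least `d` such that the invariant rational functions of degree at most `d`
generate the invariant field over `k`. -/
def betaR (ρ : G → GL (Fin N) k) : ℕ :=
  sInf {d : ℕ | ∀ f, IsInv ρ f →
    f ∈ IntermediateField.adjoin k {h | IsInv ρ h ∧ RDegLE h d}}

/-- `β(G,V)`: the least `d` such that the invariant polynomials of degree at most `d`
generate the invariant field over `k`. -/
def betaP (ρ : G → GL (Fin N) k) : ℕ :=
  sInf {d : ℕ | ∀ f, IsInv ρ f →
    f ∈ IntermediateField.adjoin k {h | IsInv ρ h ∧ PDegLE h d}}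

/-- `γ^r(G,V)`: the least `d` such that the invariant rational functions of degree at most `d`
contain a transcendence basis for the invariant field over `k`. -/
def gammaR (ρ : G → GL (Fin N) k) : ℕ :=
  sInf {d : ℕ | ∃ s : Set (FractionRing (MvPolynomial (Fin N) k)),
    (∀ f ∈ s, IsInv ρ f ∧ RDegLE f d) ∧
    AlgebraicIndependent k ((↑) : s → FractionRing (MvPolynomial (Fin N) k)) ∧
    ∀ f, IsInv ρ f → IsAlgebraic (IntermediateField.adjoin k s) f}

/-- `γ(G,V)`: the least `d` such that the invariant polynomials of degree at most `d`
contain a transcendence basis for the invariant field over `k`. -/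
def gammaP (ρ : G → GL (Fin N) k) : ℕ :=
  sInf {d : ℕ | ∃ s : Set (FractionRing (MvPolynomial (Fin N) k)),
    (∀ f ∈ s, IsInv ρ f ∧ PDegLE f d) ∧
    AlgebraicIndependent k ((↑) : s → FractionRing (MvPolynomial (Fin N) k)) ∧
    ∀ f, IsInv ρ f → IsAlgebraic (IntermediateField.adjoin k s) f}

variable [CommGroup G]

/-- The invertible diagonal matrix with units `c i` on the diagonal. -/
def diagGL (c : Fin N → kˣ) : GL (Fin N) k :=
  ⟨Matrix.diagonal fun i => (c i : k), Matrix.diagonal fun i => ((c i)⁻¹ : kˣ),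
   by simp [Matrix.diagonal_mul_diagonal], by simp [Matrix.diagonal_mul_diagonal]⟩

/-- The diagonal linear action of `G` attached to a tuple of characters `χ i : G →* kˣ`:
`g` acts by scaling the `i`-th coordinate by `χ i g`. -/
def diagρ (χ : Fin N → (G →* kˣ)) : G → GL (Fin N) k :=
  fun g => diagGL fun i => χ i g

/-- The exponent vector `a ∈ ℤᴺ` lies in the lattice `L(G,V)` of exponent vectors of
`G`-invariant Laurent monomials. -/
def inLat (χ : Fin N → (G →* kˣ)) (a : Fin N → ℤ) : Prop :=
  ∀ g, ∏ i, (χ i g) ^ (a i) = 1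

/-- The degree (`L¹`-norm) of an exponent vector. -/
def degZ (a : Fin N → ℤ) : ℕ := ∑ i, (a i).natAbs

/-- The Laurent monomial `x^a ∈ k(x₁,…,x_N)` with exponent vector `a : Fin N → ℤ`. -/
def laur (a : Fin N → ℤ) : FractionRing (MvPolynomial (Fin N) k) :=
  ∏ i, (algebraMap (MvPolynomial (Fin N) k) (FractionRing (MvPolynomial (Fin N) k)) (X i)) ^ (a i)

/-- The lattice `L(G,V)` as an additive subgroup of `ℤᴺ`. -/
def latgrp (χ : Fin N → (G →* kˣ)) : AddSubgroup (Fin N → ℤ) where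
  carrier := {a | inLat χ a}
  zero_mem' := by intro g; simp
  add_mem' := by
    intro a b ha hb g
    simp only [Pi.add_apply, zpow_add]
    rw [Finset.prod_mul_distrib, ha g, hb g, mul_one]
  neg_mem' := by
    intro a ha g
    simp only [Pi.neg_apply, zpow_neg]
    rw [Finset.prod_inv_distrib, ha g, inv_one]

/-! An invariant `f = f₁/f₂` in lowest terms forces `g • f₁ = c_g f₁` and `g • f₂ = c_g f₂`
for a constant `c_g`, since the units of `k[x]` are constants. For a diagonal action this says
that all monomials of `f₁` and `f₂` carry the same character, so for any of them `x^{m₀}` each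
`x^m / x^{m₀}` is an invariant Laurent monomial. Choosing `x^{m₀}` of degree at most
`min (deg f₁) (deg f₂)` bounds these degrees by `deg f₁ + deg f₂`, and
`f = (f₁ / x^{m₀}) / (f₂ / x^{m₀})` exhibits `f` in the subfield they generate. -/

theorem IsRelPrime.exists_unit_of_map_mul_eq {R : Type*} [CommMonoidWithZero R]
    [IsCancelMulZero R] [DecompositionMonoid R] (σ : R ≃* R) {a b : R} (hab : IsRelPrime a b)
    (hb : b ≠ 0) (h : σ a * b = a * σ b) : ∃ u : Rˣ, σ a = a * u ∧ σ b = b * u := by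
  have hσab : IsRelPrime (σ a) (σ b) := by
    apply IsRelPrime.of_map σ.symm
    simpa using hab
  have hb_dvd : b ∣ σ b := hab.symm.dvd_of_dvd_mul_left ⟨σ a, by rw [← h, mul_comm]⟩
  have hσb_dvd : σ b ∣ b := hσab.symm.dvd_of_dvd_mul_left ⟨a, by rw [h, mul_comm]⟩
  obtain ⟨u, hu⟩ := associated_of_dvd_dvd hb_dvd hσb_dvd
  refine ⟨u, mul_right_cancel₀ hb ?_, hu.symm⟩
  rw [h, ← hu]
  ac_rfl

lemma mAct_diagonal_monomial (c : Fin N → k) (m : Fin N →₀ ℕ) (a : k) :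
    mAct (Matrix.diagonal c) (monomial m a) = monomial m ((∏ i, c i ^ m i) * a) := by
  have hX : ∀ i, (∑ j, C (Matrix.diagonal c i j) * X j : MvPolynomial (Fin N) k)
      = C (c i) * X i := fun i => by
    rw [Finset.sum_eq_single i (fun j _ hj => by simp [Matrix.diagonal_apply_ne _ hj.symm])
      (by simp)]
    simp
  simp only [mAct, aeval_monomial, hX, mul_pow, ← C_pow]
  rw [Finsupp.prod_fintype _ _ (fun i => by simp), Finset.prod_mul_distrib, ← map_prod,
    monomial_eq, Finsupp.prod_fintype _ _ (fun i => by simp), algebraMap_eq, ← mul_assoc,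
    ← C_mul, mul_comm a]

lemma coeff_mAct_diagonal (c : Fin N → k) (p : MvPolynomial (Fin N) k) (m : Fin N →₀ ℕ) :
    coeff m (mAct (Matrix.diagonal c) p) = (∏ i, c i ^ m i) * coeff m p := by
  conv_lhs => rw [p.as_sum, map_sum]
  simp only [coeff_sum, mAct_diagonal_monomial, coeff_monomial]
  rw [Finset.sum_ite_eq']
  split_ifs with hm
  · rfl
  · rw [notMem_support_iff.mp hm, mul_zero]

lemma prod_pow_eq_of_mAct_diagonal_eq_C_mul {c : Fin N → k} {p : MvPolynomial (Fin N) k}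
    {u : k} (h : mAct (Matrix.diagonal c) p = C u * p) {m : Fin N →₀ ℕ}
    (hm : m ∈ p.support) :
    ∏ i, c i ^ m i = u := by
  have hcoeff := coeff_mAct_diagonal c p m
  rw [h, coeff_C_mul] at hcoeff
  exact mul_right_cancel₀ (mem_support_iff.mp hm) hcoeff.symm

lemma fAct_algebraMap (M : GL (Fin N) k) (p : MvPolynomial (Fin N) k) :
    fAct M (algebraMap (MvPolynomial (Fin N) k) (FractionRing (MvPolynomial (Fin N) k)) p)
      = algebraMap (MvPolynomial (Fin N) k) (FractionRing (MvPolynomial (Fin N) k))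
          (mAct (M : Matrix (Fin N) (Fin N) k) p) :=
  IsFractionRing.ringEquivOfRingEquiv_algebraMap _ p

lemma mAct_mul_eq_of_fAct_div_eq (M : GL (Fin N) k) {p q : MvPolynomial (Fin N) k} (hq : q ≠ 0)
    (h : fAct M (algebraMap _ (FractionRing (MvPolynomial (Fin N) k)) p / algebraMap _ _ q)
      = algebraMap _ _ p / algebraMap _ _ q) :
    mAct (M : Matrix (Fin N) (Fin N) k) p * q = p * mAct (M : Matrix (Fin N) (Fin N) k) q := by
  have hinj := IsFractionRing.injective (MvPolynomial (Fin N) k)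
    (FractionRing (MvPolynomial (Fin N) k))
  have hMq : mAct (M : Matrix (Fin N) (Fin N) k) q ≠ 0 :=
    (map_ne_zero_iff _ (mEquiv M).injective).mpr hq
  rw [map_div₀, fAct_algebraMap, fAct_algebraMap,
    div_eq_div_iff ((map_ne_zero_iff _ hinj).mpr hMq) ((map_ne_zero_iff _ hinj).mpr hq),
    ← map_mul, ← map_mul] at h
  exact hinj h

lemma exists_prod_pow_eq_of_isInv (χ : Fin N → (G →* kˣ)) {f₁ f₂ : MvPolynomial (Fin N) k}
    (hf : IsInv (diagρ χ)
      (algebraMap _ (FractionRing (MvPolynomial (Fin N) k)) f₁ / algebraMap _ _ f₂))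
    (hcop : IsRelPrime f₁ f₂) (hf₂ : f₂ ≠ 0) (g : G) :
    ∃ u : k, ∀ m ∈ f₁.support ∪ f₂.support, ∏ i, ((χ i g : kˣ) : k) ^ m i = u := by
  obtain ⟨v, hv₁, hv₂⟩ := hcop.exists_unit_of_map_mul_eq
    (mEquiv (diagρ χ g)).toMulEquiv hf₂ (mAct_mul_eq_of_fAct_div_eq _ hf₂ (hf g))
  obtain ⟨u, -, hu⟩ := isUnit_iff_eq_C_of_isReduced.mp v.isUnit
  refine ⟨u, fun m hm => ?_⟩
  rw [hu, mul_comm] at hv₁ hv₂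
  rcases Finset.mem_union.mp hm with hm | hm
  · exact prod_pow_eq_of_mAct_diagonal_eq_C_mul hv₁ hm
  · exact prod_pow_eq_of_mAct_diagonal_eq_C_mul hv₂ hm

lemma inLat_sub_of_prod_pow_eq (χ : Fin N → (G →* kˣ)) {m m' : Fin N →₀ ℕ}
    (h : ∀ g, ∏ i, ((χ i g : kˣ) : k) ^ m i = ∏ i, ((χ i g : kˣ) : k) ^ m' i) :
    inLat χ (fun i => (m i : ℤ) - m' i) := by
  intro g
  have hunits : ∏ i, χ i g ^ m i = ∏ i, χ i g ^ m' i := Units.ext (by push_cast; exact h g)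
  simp only [zpow_sub, zpow_natCast]
  rw [Finset.prod_mul_distrib, Finset.prod_inv_distrib, hunits, mul_inv_cancel]

lemma degZ_sub_le (m m' : Fin N →₀ ℕ) :
    degZ (fun i => (m i : ℤ) - m' i) ≤ (∑ i, m i) + ∑ i, m' i := by
  rw [degZ, ← Finset.sum_add_distrib]
  exact Finset.sum_le_sum fun i _ => by omega

lemma sum_le_totalDegree {p : MvPolynomial (Fin N) k} {m : Fin N →₀ ℕ}
    (hm : m ∈ p.support) :
    ∑ i, m i ≤ p.totalDegree := by
  have h := le_totalDegree hm
  rwa [Finsupp.sum_fintype _ _ (fun _ => rfl)] at h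

lemma exists_mem_support_sum_le_min {p q : MvPolynomial (Fin N) k} (hp : p ≠ 0) (hq : q ≠ 0) :
    ∃ m₀ ∈ p.support ∪ q.support, ∑ i, m₀ i ≤ min p.totalDegree q.totalDegree := by
  rcases le_total p.totalDegree q.totalDegree with h | h
  · obtain ⟨m₀, hm₀⟩ := support_nonempty.mpr hp
    exact ⟨m₀, Finset.mem_union_left _ hm₀, (min_eq_left h).symm ▸ sum_le_totalDegree hm₀⟩
  · obtain ⟨m₀, hm₀⟩ := support_nonempty.mpr hq
    exact ⟨m₀, Finset.mem_union_right _ hm₀, (min_eq_right h).symm ▸ sum_le_totalDegree hm₀⟩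

lemma laur_ne_zero (a : Fin N → ℤ) : (laur a : FractionRing (MvPolynomial (Fin N) k)) ≠ 0 :=
  Finset.prod_ne_zero_iff.mpr fun i _ => zpow_ne_zero _ <|
    (map_ne_zero_iff _ (IsFractionRing.injective _ _)).mpr (X_ne_zero i)

lemma laur_add (a b : Fin N → ℤ) :
    (laur (a + b) : FractionRing (MvPolynomial (Fin N) k)) = laur a * laur b := by
  rw [laur, laur, laur, ← Finset.prod_mul_distrib]
  refine Finset.prod_congr rfl fun i _ => zpow_add₀ ?_ _ _
  exact (map_ne_zero_iff _ (IsFractionRing.injective _ _)).mpr (X_ne_zero i)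

lemma laur_natCast (m : Fin N →₀ ℕ) :
    (laur (fun i => (m i : ℤ)) : FractionRing (MvPolynomial (Fin N) k))
      = algebraMap (MvPolynomial (Fin N) k) _ (monomial m 1) := by
  rw [laur, monomial_eq, map_one, one_mul, Finsupp.prod_fintype _ _ (fun i => by simp), map_prod]
  exact Finset.prod_congr rfl fun i _ => by rw [zpow_natCast, map_pow]

lemma algebraMap_mul_laur_mem_adjoin {S : Set (FractionRing (MvPolynomial (Fin N) k))}
    (p : MvPolynomial (Fin N) k) (m₀ : Fin N →₀ ℕ)
    (h : ∀ m ∈ p.support, laur (fun i => (m i : ℤ) - m₀ i) ∈ S) :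
    algebraMap _ _ p * laur (fun i => -(m₀ i : ℤ)) ∈ IntermediateField.adjoin k S := by
  have hterm : ∀ m, algebraMap _ _ (monomial m (coeff m p)) * laur (fun i => -(m₀ i : ℤ))
      = algebraMap k (FractionRing (MvPolynomial (Fin N) k)) (coeff m p)
          * laur (fun i => (m i : ℤ) - m₀ i) := fun m => by
    have hsplit :
        (fun i => (m i : ℤ) - m₀ i) = (fun i => (m i : ℤ)) + fun i => -(m₀ i : ℤ) :=
      funext fun i => sub_eq_add_neg _ _
    rw [hsplit, laur_add, laur_natCast, ← mul_one (coeff m p), ← C_mul_monomial, map_mul,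
      mul_assoc, IsScalarTower.algebraMap_apply k (MvPolynomial (Fin N) k), algebraMap_eq, mul_one]
  rw [p.as_sum, map_sum, Finset.sum_mul]
  refine sum_mem fun m hm => ?_
  rw [hterm]
  exact mul_mem (IntermediateField.algebraMap_mem _ _)
    (IntermediateField.subset_adjoin _ _ (h m hm))

theorem stmt4_general {k : Type} [Field k] {N : ℕ} {G : Type} [CommGroup G]
    (χ : Fin N → (G →* kˣ)) (d : ℕ)
    (f : FractionRing (MvPolynomial (Fin N) k))
    (hf : IsInv (diagρ χ) f) (hd : RDegLE f d) :
    f ∈ IntermediateField.adjoin k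
      {h : FractionRing (MvPolynomial (Fin N) k) |
        ∃ a : Fin N → ℤ, inLat χ a ∧ degZ a ≤ d ∧ h = laur a} := by
  obtain ⟨f₁, f₂, hf₂, hcop, rfl, hdeg⟩ := hd
  rcases eq_or_ne f₁ 0 with rfl | hf₁
  · simp
  obtain ⟨m₀, hm₀, hm₀d⟩ := exists_mem_support_sum_le_min hf₁ hf₂
  choose u hu using exists_prod_pow_eq_of_isInv χ hf hcop hf₂
  have hgen : ∀ m ∈ f₁.support ∪ f₂.support,
      ∑ i, m i ≤ max f₁.totalDegree f₂.totalDegree →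
      laur (fun i => (m i : ℤ) - m₀ i) ∈ {h : FractionRing (MvPolynomial (Fin N) k) |
        ∃ a : Fin N → ℤ, inLat χ a ∧ degZ a ≤ d ∧ h = laur a} := fun m hm hmd =>
    ⟨_, inLat_sub_of_prod_pow_eq χ fun g => by rw [hu g m hm, hu g m₀ hm₀],
      (degZ_sub_le m m₀).trans (by omega), rfl⟩
  rw [← mul_div_mul_right _ _ (laur_ne_zero fun i => -(m₀ i : ℤ))]
  exact div_mem
    (algebraMap_mul_laur_mem_adjoin f₁ m₀ fun m hm => hgen m (Finset.mem_union_left _ hm)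
      ((sum_le_totalDegree hm).trans (le_max_left _ _)))
    (algebraMap_mul_laur_mem_adjoin f₂ m₀ fun m hm => hgen m (Finset.mem_union_right _ hm)
      ((sum_le_totalDegree hm).trans (le_max_right _ _)))

/-- For a diagonal action of a finite abelian group `G` (in nonmodular
characteristic), every `G`-invariant rational function of degree at most `d` lies in the
subfield generated over `k` by the `G`-invariant Laurent monomials of degree at most `d`. -/
theorem stmt4 {k : Type} [Field k] {N : ℕ} {G : Type} [CommGroup G] [Fintype G]
    (hchar : (Fintype.card G : k) ≠ 0) (χ : Fin N → (G →* kˣ)) (d : ℕ)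
    (f : FractionRing (MvPolynomial (Fin N) k))
    (hf : IsInv (diagρ χ) f) (hd : RDegLE f d) :
    f ∈ IntermediateField.adjoin k
      {h : FractionRing (MvPolynomial (Fin N) k) |
        ∃ a : Fin N → ℤ, inLat χ a ∧ degZ a ≤ d ∧ h = laur a} :=
  stmt4_general χ d f hf hd
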